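/- arXiv:2501.05543 — 2 statements merged into one kernel-verified Lean document; each statement's English description precedes it below -/
import Mathlib

section
/- Let N ≥ 1 be an integer and a_1, …, a_N real numbers, and define h_ℓ^{[k]} by h_1^{[k]} = −1 + Σ_{i=k+1}^{N} a_i² and h_ℓ^{[k]} = Σ_{i=k+1}^{N+2−ℓ} a_i² · h_{ℓ−1}^{[i]} for ℓ ≥ 2 (empty sums are zero). Then the finite sequence (1, h_1^{[0]}, h_2^{[0]}, …, h_N^{[0]}) has at most one change of sign; precisely, for all integers 1 ≤ i ≤ j ≤ N, if h_i^{[0]} ≤ 0 then h_j^{[0]} ≤ 0. -/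
/-!
For `ℓ ≥ 2`, `h_ℓ^{[k]}` is a tail sum of `h_{ℓ-1}^{[i]}`, `i > k`, with nonnegative weights `aᵢ²`.
By induction on `ℓ`, the set of `k` with `h_ℓ^{[k]} ≤ 0` is an upper set: if some dropped term
`h_{ℓ-1}^{[i]}`, `k < i ≤ k'`, is nonpositive then so are all later ones and the shorter tail is
nonpositive; otherwise dropping the terms only lowers the sum. In particular `h_ℓ^{[0]} ≤ 0` makes
every term of `h_{ℓ+1}^{[0]}` nonpositive.
-/

/-- The recursively defined coefficients `h_ℓ^{[k]}` appearing in the expansion of the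
horizon polynomial: `h 1 k = -1 + ∑_{i=k+1}^N aᵢ²` and
`h ℓ k = ∑_{i=k+1}^{N+2-ℓ} aᵢ² · h (ℓ-1) i` for `ℓ ≥ 2` (empty sums are zero). -/
noncomputable def hcoef (N : ℕ) (a : ℕ → ℝ) : ℕ → ℕ → ℝ
  | 0, _ => 0
  | 1, k => -1 + ∑ i ∈ Finset.Icc (k + 1) N, (a i) ^ 2
  | (ℓ + 2), k => ∑ i ∈ Finset.Icc (k + 1) (N + 2 - (ℓ + 2)), (a i) ^ 2 * hcoef N a (ℓ + 1) i

open Finset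

lemma hcoef_add_two (N : ℕ) (a : ℕ → ℝ) (ℓ k : ℕ) :
    hcoef N a (ℓ + 2) k = ∑ i ∈ Icc (k + 1) (N - ℓ), a i ^ 2 * hcoef N a (ℓ + 1) i := by
  rw [hcoef, Nat.add_sub_add_right]

lemma isUpperSet_tail_sum_nonpos {w f : ℕ → ℝ} (hw : ∀ i, 0 ≤ w i)
    (hf : IsUpperSet {i | f i ≤ 0}) (M : ℕ) :
    IsUpperSet {k | ∑ i ∈ Icc (k + 1) M, w i * f i ≤ 0} := by
  intro k k' hkk' (hk : ∑ i ∈ Icc (k + 1) M, w i * f i ≤ 0)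
  show ∑ i ∈ Icc (k' + 1) M, w i * f i ≤ 0
  by_cases hdrop : ∃ t ∈ Icc (k + 1) k', f t ≤ 0
  · obtain ⟨t, ht, hft⟩ := hdrop
    refine sum_nonpos fun i hi => mul_nonpos_of_nonneg_of_nonpos (hw i) (hf ?_ hft)
    simp only [mem_Icc] at ht hi
    omega
  · push Not at hdrop
    refine le_trans (sum_le_sum_of_subset_of_nonneg (Icc_subset_Icc_left (by omega)) ?_) hk
    intro i hi hi'
    simp only [mem_Icc, not_and_or] at hi hi'
    exact mul_nonneg (hw i) (hdrop i (mem_Icc.mpr ⟨hi.1, by omega⟩)).le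

lemma isUpperSet_hcoef_nonpos (N : ℕ) (a : ℕ → ℝ) :
    ∀ ℓ, IsUpperSet {k | hcoef N a ℓ k ≤ 0}
  | 0 => fun _ _ _ _ => by simp [hcoef]
  | 1 => by
    intro k k' hkk' hk
    have htail : ∑ i ∈ Icc (k' + 1) N, a i ^ 2 ≤ ∑ i ∈ Icc (k + 1) N, a i ^ 2 :=
      sum_le_sum_of_subset_of_nonneg (Icc_subset_Icc_left (by omega)) fun i _ _ => sq_nonneg _
    simp only [Set.mem_ofPred_eq, hcoef] at hk ⊢
    linarith
  | m + 2 => by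
    simp only [hcoef_add_two]
    exact isUpperSet_tail_sum_nonpos (fun i => sq_nonneg (a i))
      (isUpperSet_hcoef_nonpos N a (m + 1)) _

lemma hcoef_add_two_nonpos {N : ℕ} {a : ℕ → ℝ} {ℓ k : ℕ} (h : hcoef N a (ℓ + 1) k ≤ 0) :
    hcoef N a (ℓ + 2) k ≤ 0 := by
  rw [hcoef_add_two]
  exact sum_nonpos fun i hi => mul_nonpos_of_nonneg_of_nonpos (sq_nonneg _)
    (isUpperSet_hcoef_nonpos N a (ℓ + 1) (by simp only [mem_Icc] at hi; omega) h)

lemma hcoef_nonpos_of_le {N : ℕ} {a : ℕ → ℝ} {ℓ ℓ' k : ℕ} (hℓ : 1 ≤ ℓ) (hℓℓ' : ℓ ≤ ℓ')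
    (h : hcoef N a ℓ k ≤ 0) : hcoef N a ℓ' k ≤ 0 := by
  induction ℓ', hℓℓ' using Nat.le_induction with
  | base => exact h
  | succ n hn ih =>
    obtain ⟨m, rfl⟩ : ∃ m, n = m + 1 := ⟨n - 1, by omega⟩
    exact hcoef_add_two_nonpos ih

theorem hcoef_at_most_one_sign_change_general
    (N : ℕ) (a : ℕ → ℝ) :
    ∀ i j : ℕ, 1 ≤ i → i ≤ j → j ≤ N → hcoef N a i 0 ≤ 0 → hcoef N a j 0 ≤ 0 :=
  fun _ _ hi hij _ h => hcoef_nonpos_of_le hi hij h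

/-- The sequence `(1, h_1^{[0]}, …, h_N^{[0]})` has at most one change of
sign: for all integers `1 ≤ i ≤ j ≤ N`, if `h_i^{[0]} ≤ 0` then `h_j^{[0]} ≤ 0`. -/
theorem hcoef_at_most_one_sign_change
    (N : ℕ) (hN : 1 ≤ N) (a : ℕ → ℝ) :
    ∀ i j : ℕ, 1 ≤ i → i ≤ j → j ≤ N → hcoef N a i 0 ≤ 0 → hcoef N a j 0 ≤ 0 :=
  hcoef_at_most_one_sign_change_general N a
end

section
/- Let N ≥ 1 be an integer, ℓ > 0, and a_1, …, a_N nonzero real numbers. There exists ε > 0 such that for every real m with |m| < ε, the polynomial F_m(r) = (ℓ² − r²)·∏_{i=1}^N (r² + a_i²) + 2ℓ²·m·r has exactly two distinct real roots. -/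
/-!
Since `F_m(-r) = F_{-m}(r)` and `F_m(0) = ℓ² ∏ aᵢ² ≠ 0`, it suffices to show that `F_m` has exactly
one positive root for small `|m|`. At `m = 0` the only positive root is `r = ℓ`, where
`F_0'(ℓ) = -2ℓ ∏ (ℓ² + aᵢ²) < 0`. Adding `2ℓ²mr` keeps `F_m` strictly decreasing on a fixed
neighbourhood `[ℓ - δ, ℓ + δ]` of `ℓ` and, for `2ℓ²|m| < δ ∏ aᵢ²`, keeps its sign on `(0, ℓ - δ]`
and on `[ℓ + δ, ∞)`.
-/

open Finset Set

lemma encard_setOf_eq_zero_eq_two {f : ℝ → ℝ} (h0 : f 0 ≠ 0) (hpos : ∃! r, 0 < r ∧ f r = 0)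
    (hneg : ∃! r, 0 < r ∧ f (-r) = 0) : {r | f r = 0}.encard = 2 := by
  obtain ⟨u, ⟨hu, hfu⟩, hu_uniq⟩ := hpos
  obtain ⟨v, ⟨hv, hfv⟩, hv_uniq⟩ := hneg
  have hzeros : {r | f r = 0} = {u, -v} := by
    ext r
    simp only [mem_ofPred_eq, mem_insert_iff, mem_singleton_iff]
    constructor
    · intro hr
      rcases lt_trichotomy r 0 with hr0 | rfl | hr0
      · exact Or.inr (by rw [← hv_uniq (-r) ⟨neg_pos.mpr hr0, by rwa [neg_neg]⟩, neg_neg])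
      · exact absurd hr h0
      · exact Or.inl (hu_uniq r ⟨hr0, hr⟩)
    · rintro (rfl | rfl) <;> assumption
  rw [hzeros, encard_pair]
  linarith

lemma existsUnique_pos_eq_zero_of_strictAntiOn {f : ℝ → ℝ} {x₁ x₂ : ℝ} (hx₁ : 0 < x₁)
    (hf : ContinuousOn f (Icc x₁ x₂)) (hanti : StrictAntiOn f (Icc x₁ x₂))
    (hleft : ∀ r, 0 < r → r ≤ x₁ → 0 < f r) (hright : ∀ r, x₂ ≤ r → f r < 0) :
    ∃! r, 0 < r ∧ f r = 0 := by
  have hx₁₂ : x₁ ≤ x₂ := by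
    by_contra! h
    exact (hleft x₁ hx₁ le_rfl).not_gt (hright x₁ h.le)
  obtain ⟨u, hu, hfu⟩ := intermediate_value_Icc' hx₁₂ hf
    ⟨(hright x₂ le_rfl).le, (hleft x₁ hx₁ le_rfl).le⟩
  refine ⟨u, ⟨hx₁.trans_le hu.1, hfu⟩, fun r ⟨hr, hfr⟩ => ?_⟩
  have hr_mem : r ∈ Icc x₁ x₂ := by
    constructor
    · by_contra! h
      exact (hleft r hr h.le).ne' hfr
    · by_contra! h
      exact (hright r h.le).ne hfr
  exact hanti.injOn hr_mem hu (hfr.trans hfu.symm)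

lemma exists_strictAntiOn_add_mul {f : ℝ → ℝ} {x₀ : ℝ} (hf : Differentiable ℝ f)
    (hf' : ContinuousAt (deriv f) x₀) (hx₀ : deriv f x₀ < 0) :
    ∃ δ > 0, ∃ η > 0, ∀ c, |c| < η →
      StrictAntiOn (fun x => f x + c * x) (Icc (x₀ - δ) (x₀ + δ)) := by
  have hη : 0 < -deriv f x₀ / 2 := by linarith
  have hnear : ∀ᶠ x in nhds x₀, deriv f x < deriv f x₀ / 2 :=
    hf'.eventually_lt continuousAt_const (by linarith)
  obtain ⟨δ, hδ, hball⟩ := Metric.nhds_basis_closedBall.eventually_iff.mp hnear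
  refine ⟨δ, hδ, _, hη, fun c hc => ?_⟩
  rw [← Real.closedBall_eq_Icc]
  refine strictAntiOn_of_deriv_neg (convex_closedBall _ _)
    (hf.continuous.add (continuous_const.mul continuous_id)).continuousOn fun x hx => ?_
  have hderiv : HasDerivAt (fun x => f x + c * x) (deriv f x + c) x := by
    simpa using (hf x).hasDerivAt.fun_add ((hasDerivAt_id x).const_mul c)
  rw [hderiv.deriv]
  linarith [hball (interior_subset hx), le_abs_self c]

section Horizon

variable {ι : Type*} [Fintype ι]

noncomputable def rotationFactor (a : ι → ℝ) (r : ℝ) : ℝ := ∏ i, (r ^ 2 + a i ^ 2)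

noncomputable def horizonFunction (L : ℝ) (a : ι → ℝ) (m r : ℝ) : ℝ :=
  (L ^ 2 - r ^ 2) * rotationFactor a r + 2 * L ^ 2 * m * r

lemma rotationFactor_pos (a : ι → ℝ) (ha : ∀ i, a i ≠ 0) (r : ℝ) : 0 < rotationFactor a r :=
  prod_pos fun i _ => by have := ha i; positivity

lemma rotationFactor_nonneg (a : ι → ℝ) (r : ℝ) : 0 ≤ rotationFactor a r :=
  prod_nonneg fun i _ => by positivity

lemma rotationFactor_le_of_sq_le (a : ι → ℝ) {r s : ℝ} (h : r ^ 2 ≤ s ^ 2) :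
    rotationFactor a r ≤ rotationFactor a s := by
  unfold rotationFactor
  exact prod_le_prod (fun i _ => by positivity) fun i _ => by linarith

lemma rotationFactor_zero_le (a : ι → ℝ) (r : ℝ) : rotationFactor a 0 ≤ rotationFactor a r :=
  rotationFactor_le_of_sq_le a (by simpa using sq_nonneg r)

lemma horizonFunction_neg_right (L : ℝ) (a : ι → ℝ) (m r : ℝ) :
    horizonFunction L a m (-r) = horizonFunction L a (-m) r := by
  simp only [horizonFunction, rotationFactor, neg_sq]
  ring

lemma horizonFunction_zero_pos {L : ℝ} (hL : L ≠ 0) {a : ι → ℝ} (ha : ∀ i, a i ≠ 0) (m : ℝ) :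
    0 < horizonFunction L a m 0 := by
  have := rotationFactor_pos a ha 0
  simp only [horizonFunction, ne_eq, OfNat.ofNat_ne_zero, not_false_eq_true, zero_pow, sub_zero,
    mul_zero, add_zero]
  positivity

variable {L δ m r : ℝ} {a : ι → ℝ}

lemma horizonFunction_pos_of_le_sub (hδ : 0 < δ) (hm : 2 * L ^ 2 * |m| < δ * rotationFactor a 0)
    (hr : 0 ≤ r) (hrL : r ≤ L - δ) : 0 < horizonFunction L a m r := by
  have hδP₀ : 0 < δ * rotationFactor a 0 := lt_of_le_of_lt (by positivity) hm
  have hP₀ : 0 < rotationFactor a 0 := pos_of_mul_pos_right hδP₀ hδ.le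
  have hL : 0 < L := by linarith
  have hgap : δ * L ≤ L ^ 2 - r ^ 2 := by nlinarith
  have hmain : δ * L * rotationFactor a 0 ≤ (L ^ 2 - r ^ 2) * rotationFactor a r :=
    mul_le_mul hgap (rotationFactor_zero_le a r) hP₀.le ((mul_pos hδ hL).le.trans hgap)
  have hmass : |2 * L ^ 2 * m * r| ≤ 2 * L ^ 2 * |m| * L := by
    rw [abs_mul, abs_mul, abs_of_nonneg hr, abs_of_nonneg (by positivity : (0 : ℝ) ≤ 2 * L ^ 2)]
    gcongr
    linarith
  unfold horizonFunction
  linarith [neg_abs_le (2 * L ^ 2 * m * r), mul_lt_mul_of_pos_right hm hL]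

lemma horizonFunction_neg_of_add_le (hδ : 0 < δ) (hL : 0 ≤ L)
    (hm : 2 * L ^ 2 * |m| < δ * rotationFactor a 0) (hrL : L + δ ≤ r) :
    horizonFunction L a m r < 0 := by
  have hr : 0 < r := by linarith
  have hgap : L ^ 2 - r ^ 2 ≤ -(δ * r) := by nlinarith
  have hmain : (L ^ 2 - r ^ 2) * rotationFactor a r ≤ -(δ * r) * rotationFactor a 0 :=
    calc (L ^ 2 - r ^ 2) * rotationFactor a r ≤ -(δ * r) * rotationFactor a r :=
          mul_le_mul_of_nonneg_right hgap (rotationFactor_nonneg a r)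
      _ ≤ -(δ * r) * rotationFactor a 0 :=
          mul_le_mul_of_nonpos_left (rotationFactor_zero_le a r) (by nlinarith)
  have hmass : 2 * L ^ 2 * m * r ≤ 2 * L ^ 2 * |m| * r := by
    gcongr
    exact le_abs_self m
  unfold horizonFunction
  linarith [mul_lt_mul_of_pos_right hm hr]

lemma exists_strictAntiOn_horizonFunction (hL : 0 < L) (ha : ∀ i, a i ≠ 0) :
    ∃ δ > 0, δ < L ∧ ∃ η > 0, ∀ m, 2 * L ^ 2 * |m| < η →
      StrictAntiOn (horizonFunction L a m) (Icc (L - δ) (L + δ)) := by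
  set F₀ : ℝ → ℝ := fun r => (L ^ 2 - r ^ 2) * rotationFactor a r
  have hF₀ : ContDiff ℝ 1 F₀ := by unfold F₀ rotationFactor; fun_prop
  have hF₀L : HasDerivAt F₀ (-(2 * L) * rotationFactor a L) L := by
    have hP : DifferentiableAt ℝ (rotationFactor a) L := by unfold rotationFactor; fun_prop
    have h := ((hasDerivAt_pow 2 L).const_sub (L ^ 2)).mul hP.hasDerivAt
    rw [sub_self, zero_mul, add_zero] at h
    exact h.congr_deriv (by norm_num)
  have hF₀L_neg : deriv F₀ L < 0 := by
    rw [hF₀L.deriv]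
    have := rotationFactor_pos a ha L
    nlinarith
  obtain ⟨δ, hδ, η, hη, hanti⟩ := exists_strictAntiOn_add_mul (hF₀.differentiable one_ne_zero)
    (hF₀.continuous_deriv le_rfl).continuousAt hF₀L_neg
  have hδL : min δ (L / 2) ≤ δ := min_le_left _ _
  refine ⟨min δ (L / 2), lt_min hδ (half_pos hL), by linarith [min_le_right δ (L / 2)], η, hη,
    fun m hm => (hanti (2 * L ^ 2 * m) ?_).mono (Icc_subset_Icc (by linarith) (by linarith))⟩
  rwa [abs_mul, abs_of_pos (by positivity : (0 : ℝ) < 2 * L ^ 2)]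

lemma exists_existsUnique_pos_horizonFunction_eq_zero (hL : 0 < L) (ha : ∀ i, a i ≠ 0) :
    ∃ ε > 0, ∀ m, |m| < ε → ∃! r, 0 < r ∧ horizonFunction L a m r = 0 := by
  obtain ⟨δ, hδ, hδL, η, hη, hanti⟩ := exists_strictAntiOn_horizonFunction hL ha
  have hP₀ := rotationFactor_pos a ha 0
  refine ⟨min η (δ * rotationFactor a 0) / (2 * L ^ 2), by positivity, fun m hm => ?_⟩
  have hm' : 2 * L ^ 2 * |m| < min η (δ * rotationFactor a 0) := by
    rwa [lt_div_iff₀ (by positivity), mul_comm] at hm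
  have hm_small := hm'.trans_le (min_le_right _ _)
  have hcont : Continuous (horizonFunction L a m) := by
    unfold horizonFunction rotationFactor; fun_prop
  exact existsUnique_pos_eq_zero_of_strictAntiOn (sub_pos.mpr hδL) hcont.continuousOn
    (hanti m (hm'.trans_le (min_le_left _ _)))
    (fun r hr hrL => horizonFunction_pos_of_le_sub hδ hm_small hr.le hrL)
    (fun r hrL => horizonFunction_neg_of_add_le hδ hL.le hm_small hrL)

end Horizon

theorem horizon_function_two_roots_small_mass_general
    (N : ℕ) (L : ℝ) (hL : 0 < L) (a : Fin N → ℝ) (ha : ∀ i, a i ≠ 0) :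
    ∃ ε : ℝ, 0 < ε ∧ ∀ m : ℝ, |m| < ε →
      {r : ℝ | (L ^ 2 - r ^ 2) * (∏ i, (r ^ 2 + a i ^ 2)) + 2 * L ^ 2 * m * r = 0}.encard
        = 2 := by
  obtain ⟨ε, hε, hroot⟩ := exists_existsUnique_pos_horizonFunction_eq_zero hL ha
  refine ⟨ε, hε, fun m hm => ?_⟩
  have hneg : ∃! r, 0 < r ∧ horizonFunction L a m (-r) = 0 := by
    simpa only [horizonFunction_neg_right] using hroot (-m) (by rwa [abs_neg])
  exact encard_setOf_eq_zero_eq_two (horizonFunction_zero_pos hL.ne' ha m).ne' (hroot m hm) hneg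

/-- With `ℓ > 0` and all `aᵢ ≠ 0`, there exists `ε > 0` such that for
every real `m` with `|m| < ε` the polynomial
`F_m(r) = (ℓ² - r²) ∏ᵢ (r² + aᵢ²) + 2 ℓ² m r` has exactly two distinct real roots. -/
theorem horizon_function_two_roots_small_mass
    (N : ℕ) (hN : 1 ≤ N) (L : ℝ) (hL : 0 < L) (a : Fin N → ℝ) (ha : ∀ i, a i ≠ 0) :
    ∃ ε : ℝ, 0 < ε ∧ ∀ m : ℝ, |m| < ε →
      {r : ℝ | (L ^ 2 - r ^ 2) * (∏ i, (r ^ 2 + a i ^ 2)) + 2 * L ^ 2 * m * r = 0}.encard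
        = 2 :=
  horizon_function_two_roots_small_mass_general N L hL a ha
end
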